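/- Let a,b > 0 with a+b ≤ 1 and ab - (2/9)(a+b) ≤ 0, (a,b) ∉ {(1/3,2/3),(2/3,1/3)}. Then the function r ↦ F(a,b;a+b+1;r)/F(1/3,2/3;2;r) is strictly decreasing on (0,1). -/

import Mathlib

/-- The Gaussian hypergeometric function `F(a,b;c;x)` as a power series sum. -/
noncomputable def hyperF (a b c x : ℝ) : ℝ :=
  ∑' n : ℕ, ((ascPochhammer ℝ n).eval a * (ascPochhammer ℝ n).eval b /
    ((ascPochhammer ℝ n).eval c * (Nat.factorial n : ℝ))) * x ^ n

/-!
Both hypergeometric functions are power series `∑ A n xⁿ`, `∑ B n xⁿ` with positive coefficients,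
and `A n / B n` is nonincreasing and not constant: the ratio of consecutive coefficients of each
series is a rational function of `n`, and comparing the two reduces to a polynomial inequality in
`n` that follows from the hypotheses on `a, b`. For such series the quotient
`∑ A n xⁿ / ∑ B n xⁿ` is strictly decreasing (Biernacki–Krzyż): for `x < y`, the difference of the
cross products, expanded as a double series and symmetrized in `(m, n)`, has the terms
`(A m B n - A n B m)(xᵐ yⁿ - xⁿ yᵐ)`, which are all nonnegative and not all zero.
-/

theorem summable_ordinaryHypergeometricCoefficient_mul_pow {𝕂 : Type*} [RCLike 𝕂] {a b c x : 𝕂}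
    (habc : ∀ k : ℕ, (k : 𝕂) ≠ -a ∧ (k : 𝕂) ≠ -b ∧ (k : 𝕂) ≠ -c) (hx : ‖x‖ < 1) :
    Summable fun n => ordinaryHypergeometricCoefficient a b c n * x ^ n := by
  have hrad : x ∈ Metric.eball (0 : 𝕂) (ordinaryHypergeometricSeries 𝕂 a b c).radius := by
    rw [ordinaryHypergeometricSeries_radius_eq_one 𝕂 a b c habc, mem_eball_zero_iff,
      ← ofReal_norm, ENNReal.ofReal_lt_one]
    exact hx
  refine ((ordinaryHypergeometricSeries 𝕂 a b c).summable hrad).congr fun n => ?_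
  rw [ordinaryHypergeometricSeries_apply_eq, smul_eq_mul]

theorem hyperF_eq_tsum (a b c x : ℝ) :
    hyperF a b c x = ∑' n, ordinaryHypergeometricCoefficient a b c n * x ^ n := by
  unfold hyperF
  congr! 2
  ring

theorem ordinaryHypergeometricCoefficient_pos {a b c : ℝ} (ha : 0 < a) (hb : 0 < b) (hc : 0 < c)
    (n : ℕ) : 0 < ordinaryHypergeometricCoefficient a b c n := by
  have := ascPochhammer_pos n a ha
  have := ascPochhammer_pos n b hb
  have := ascPochhammer_pos n c hc
  positivity

theorem ordinaryHypergeometricCoefficient_succ {a b c : ℝ} (hc : 0 < c) (n : ℕ) :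
    ordinaryHypergeometricCoefficient a b c (n + 1) =
      ordinaryHypergeometricCoefficient a b c n * ((a + n) * (b + n) / ((c + n) * (n + 1))) := by
  have := (ascPochhammer_pos n c hc).ne'
  have : c + n ≠ 0 := by positivity
  simp only [ordinaryHypergeometricCoefficient, ascPochhammer_succ_eval, Nat.factorial_succ]
  push_cast
  field_simp

theorem ordinaryHypergeometricCoefficient_one {𝕂 : Type*} [Field 𝕂] (a b c : 𝕂) :
    ordinaryHypergeometricCoefficient a b c 1 = a * b / c := by
  simp [ordinaryHypergeometricCoefficient, div_eq_mul_inv]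

theorem antitone_ordinaryHypergeometricCoefficient_div {a b c a' b' c' : ℝ}
    (ha : 0 < a) (hb : 0 < b) (hc : 0 < c) (ha' : 0 < a') (hb' : 0 < b') (hc' : 0 < c')
    (h : ∀ n : ℕ, (a + n) * (b + n) * (c' + n) ≤ (c + n) * (a' + n) * (b' + n)) :
    Antitone fun n =>
      ordinaryHypergeometricCoefficient a b c n / ordinaryHypergeometricCoefficient a' b' c' n := by
  refine antitone_nat_of_succ_le fun n => ?_
  rw [ordinaryHypergeometricCoefficient_succ hc, ordinaryHypergeometricCoefficient_succ hc',
    mul_div_mul_comm]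
  have hratio : (a + n) * (b + n) / ((c + n) * (n + 1)) ≤
      (a' + n) * (b' + n) / ((c' + n) * (n + 1)) := by
    rw [div_le_div_iff₀ (by positivity) (by positivity)]
    nlinarith [h n, (n.cast_nonneg : (0 : ℝ) ≤ n)]
  refine mul_le_of_le_one_right ?_ (div_le_one_of_le₀ hratio (by positivity))
  exact (div_pos (ordinaryHypergeometricCoefficient_pos ha hb hc n)
    (ordinaryHypergeometricCoefficient_pos ha' hb' hc' n)).le

theorem ordinaryHypergeometricCoefficient_one_div_lt_zero_div {a b c a' b' c' : ℝ}
    (hc : 0 < c) (ha' : 0 < a') (hb' : 0 < b')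
    (h : a * b * c' < c * a' * b') :
    ordinaryHypergeometricCoefficient a b c 1 / ordinaryHypergeometricCoefficient a' b' c' 1 <
      ordinaryHypergeometricCoefficient a b c 0 / ordinaryHypergeometricCoefficient a' b' c' 0 := by
  simp only [ordinaryHypergeometricCoefficient_one, ordinaryHypergeometricCoefficient,
    ascPochhammer_zero, Polynomial.eval_one, Nat.factorial_zero]
  rw [div_div_div_eq, div_lt_div_iff₀ (by positivity) (by positivity)]
  simpa [mul_assoc] using h

theorem pow_mul_pow_le_pow_mul_pow {x y : ℝ} (hx : 0 ≤ x) (hxy : x ≤ y) {m n : ℕ} (hmn : m ≤ n) :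
    x ^ n * y ^ m ≤ x ^ m * y ^ n := by
  have hy := hx.trans hxy
  obtain ⟨k, rfl⟩ := Nat.exists_eq_add_of_le hmn
  calc x ^ (m + k) * y ^ m = x ^ m * y ^ m * x ^ k := by ring
    _ ≤ x ^ m * y ^ m * y ^ k := by gcongr
    _ = x ^ m * y ^ (m + k) := by ring

theorem pow_mul_pow_lt_pow_mul_pow {x y : ℝ} (hx : 0 < x) (hxy : x < y) {m n : ℕ} (hmn : m < n) :
    x ^ n * y ^ m < x ^ m * y ^ n := by
  obtain ⟨k, rfl⟩ := Nat.exists_eq_add_of_le hmn.le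
  have hy := hx.trans hxy
  have hk : k ≠ 0 := by omega
  calc x ^ (m + k) * y ^ m = x ^ m * y ^ m * x ^ k := by ring
    _ < x ^ m * y ^ m * y ^ k := by gcongr
    _ = x ^ m * y ^ (m + k) := by ring

section PowerSeriesRatio

variable {A B : ℕ → ℝ}

theorem mul_le_mul_of_antitone_div (hB : ∀ n, 0 < B n) (hAB : Antitone fun n => A n / B n)
    {m n : ℕ} (hmn : m ≤ n) : A n * B m ≤ A m * B n :=
  (div_le_div_iff₀ (hB n) (hB m)).1 (hAB hmn)

theorem mul_sub_mul_mul_pow_sub_nonneg (hB : ∀ n, 0 < B n) (hAB : Antitone fun n => A n / B n)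
    {x y : ℝ} (hx : 0 ≤ x) (hxy : x ≤ y) (m n : ℕ) :
    0 ≤ (A m * B n - A n * B m) * (x ^ m * y ^ n - x ^ n * y ^ m) := by
  rcases le_total m n with hmn | hnm
  · exact mul_nonneg (sub_nonneg.2 (mul_le_mul_of_antitone_div hB hAB hmn))
      (sub_nonneg.2 (pow_mul_pow_le_pow_mul_pow hx hxy hmn))
  · exact mul_nonneg_of_nonpos_of_nonpos (sub_nonpos.2 (mul_le_mul_of_antitone_div hB hAB hnm))
      (sub_nonpos.2 (pow_mul_pow_le_pow_mul_pow hx hxy hnm))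

theorem tsum_mul_pow_mul_tsum_mul_pow_lt (hA : ∀ n, 0 ≤ A n) (hB : ∀ n, 0 < B n)
    (hAB : Antitone fun n => A n / B n) (hAB' : ∃ m n, A n / B n < A m / B m)
    {x y : ℝ} (hx : 0 < x) (hxy : x < y)
    (hAx : Summable fun n => A n * x ^ n) (hAy : Summable fun n => A n * y ^ n)
    (hBx : Summable fun n => B n * x ^ n) (hBy : Summable fun n => B n * y ^ n) :
    (∑' n, A n * y ^ n) * (∑' n, B n * x ^ n) < (∑' n, A n * x ^ n) * (∑' n, B n * y ^ n) := by
  have hy := hx.trans hxy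
  have hprod : ∀ {u v : ℝ}, 0 ≤ u → 0 ≤ v → Summable (fun n => A n * u ^ n) →
      Summable (fun n => B n * v ^ n) →
      HasSum (fun p : ℕ × ℕ => A p.1 * u ^ p.1 * (B p.2 * v ^ p.2))
        ((∑' n, A n * u ^ n) * ∑' n, B n * v ^ n) := fun hu hv hAu hBv =>
    hAu.hasSum.mul hBv.hasSum <| hAu.mul_of_nonneg hBv (fun n => by have := hA n; positivity)
      (fun n => by have := hB n; positivity)
  set H : ℕ × ℕ → ℝ := fun p => A p.1 * B p.2 * (x ^ p.1 * y ^ p.2 - x ^ p.2 * y ^ p.1)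
    with hH_def
  have hH : HasSum H ((∑' n, A n * x ^ n) * (∑' n, B n * y ^ n) -
      (∑' n, A n * y ^ n) * ∑' n, B n * x ^ n) :=
    ((hprod hx.le hy.le hAx hBy).sub (hprod hy.le hx.le hAy hBx)).congr_fun fun p => by
      rw [hH_def]
      ring
  -- Pairing the terms `(m, n)` and `(n, m)` makes every term of the double series nonnegative.
  have hG := hH.add ((Equiv.prodComm ℕ ℕ).hasSum_iff.2 hH)
  have hG_eq : ∀ m n, H (m, n) + H (m, n).swap =
      (A m * B n - A n * B m) * (x ^ m * y ^ n - x ^ n * y ^ m) := by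
    intro m n
    simp only [hH_def, Prod.swap_prod_mk]
    ring
  have hG_nonneg : ∀ p : ℕ × ℕ, 0 ≤ H p + H p.swap := by
    rintro ⟨m, n⟩
    rw [hG_eq]
    exact mul_sub_mul_mul_pow_sub_nonneg hB hAB hx.le hxy.le m n
  obtain ⟨m, n, hlt⟩ := hAB'
  have hmn : m < n := lt_of_not_ge fun hnm => (hAB hnm).not_gt hlt
  have hG_pos : 0 < H (m, n) + H (m, n).swap := by
    rw [hG_eq]
    exact mul_pos (sub_pos.2 ((div_lt_div_iff₀ (hB n) (hB m)).1 hlt))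
      (sub_pos.2 (pow_mul_pow_lt_pow_mul_pow hx hxy hmn))
  linarith [hasSum_lt hG_nonneg hG_pos hasSum_zero hG]

theorem strictAntiOn_tsum_mul_pow_div_tsum_mul_pow (hA : ∀ n, 0 ≤ A n) (hB : ∀ n, 0 < B n)
    (hAB : Antitone fun n => A n / B n) (hAB' : ∃ m n, A n / B n < A m / B m) {R : ℝ}
    (hsA : ∀ x ∈ Set.Ioo 0 R, Summable fun n => A n * x ^ n)
    (hsB : ∀ x ∈ Set.Ioo 0 R, Summable fun n => B n * x ^ n) :
    StrictAntiOn (fun x => (∑' n, A n * x ^ n) / ∑' n, B n * x ^ n) (Set.Ioo 0 R) := by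
  have hpos : ∀ x ∈ Set.Ioo 0 R, 0 < ∑' n, B n * x ^ n := fun x hx =>
    (hsB x hx).tsum_pos (fun n => by have := hB n; have := hx.1; positivity) 0 (by simpa using hB 0)
  intro x hx y hy hxy
  rw [div_lt_div_iff₀ (hpos y hy) (hpos x hx)]
  exact tsum_mul_pow_mul_tsum_mul_pow_lt hA hB hAB hAB' hx.1 hxy (hsA x hx) (hsA y hy)
    (hsB x hx) (hsB y hy)

end PowerSeriesRatio

theorem nine_mul_mul_lt_add_add_one {a b : ℝ} (h1 : a + b ≤ 1) (h2 : a * b - (2/9) * (a + b) ≤ 0)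
    (hne : (a, b) ∉ ({(1/3, 2/3), (2/3, 1/3)} : Set (ℝ × ℝ))) : 9 * (a * b) < a + b + 1 := by
  -- Otherwise `9ab ≤ 2(a + b) ≤ a + b + 1` are equalities, so `a + b = 1` and `ab = 2/9`.
  by_contra! hge
  have hsum : a + b = 1 := by linarith
  have hroot : (3 * a - 1) * (3 * a - 2) = 0 := by
    have hb : b = 1 - a := by linarith
    subst hb
    nlinarith
  simp only [Set.mem_insert_iff, Set.mem_singleton_iff, Prod.mk.injEq, not_or, not_and] at hne
  rcases mul_eq_zero.1 hroot with h | h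
  · exact hne.1 (by linarith) (by linarith)
  · exact hne.2 (by linarith) (by linarith)

theorem stmt_9 (a b : ℝ) (ha : 0 < a) (hb : 0 < b)
    (h1 : a + b ≤ 1) (h2 : a * b - (2/9) * (a + b) ≤ 0)
    (hne : (a, b) ∉ ({(1/3, 2/3), (2/3, 1/3)} : Set (ℝ × ℝ))) :
    StrictAntiOn (fun r => hyperF a b (a + b + 1) r / hyperF (1/3) (2/3) 2 r)
      (Set.Ioo (0:ℝ) 1) := by
  have hc : 0 < a + b + 1 := by linarith
  -- The right side minus the left side is `2((a + b + 1)/9 - ab) + (11/9 - (a + b) - ab) n`.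
  have hcoeff : ∀ n : ℕ, (a + n) * (b + n) * (2 + n) ≤ (a + b + 1 + n) * (1/3 + n) * (2/3 + n) := by
    intro n
    have hn : (0 : ℝ) ≤ n := n.cast_nonneg
    nlinarith [mul_nonneg hn (by nlinarith : (0 : ℝ) ≤ 11/9 - (a + b) - a * b)]
  have hsummable : ∀ {p q s : ℝ}, 0 < p → 0 < q → 0 < s → ∀ x ∈ Set.Ioo (0 : ℝ) 1,
      Summable fun n => ordinaryHypergeometricCoefficient p q s n * x ^ n := by
    intro p q s hp hq hs x hx
    refine summable_ordinaryHypergeometricCoefficient_mul_pow (fun k => ?_) ?_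
    · have hk : (0 : ℝ) ≤ k := k.cast_nonneg
      exact ⟨by linarith, by linarith, by linarith⟩
    · rw [Real.norm_eq_abs, abs_lt]
      exact ⟨by linarith [hx.1], hx.2⟩
  simp only [hyperF_eq_tsum]
  refine strictAntiOn_tsum_mul_pow_div_tsum_mul_pow
    (fun n => (ordinaryHypergeometricCoefficient_pos ha hb hc n).le)
    (ordinaryHypergeometricCoefficient_pos (by norm_num) (by norm_num) (by norm_num))
    (antitone_ordinaryHypergeometricCoefficient_div ha hb hc (by norm_num) (by norm_num)
      (by norm_num) hcoeff)
    ⟨0, 1, ordinaryHypergeometricCoefficient_one_div_lt_zero_div hc (by norm_num) (by norm_num) ?_⟩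
    (hsummable ha hb hc) (hsummable (by norm_num) (by norm_num) (by norm_num))
  linarith [nine_mul_mul_lt_add_add_one h1 h2 hne]
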